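/- arXiv:2106.07711 — 2 statements merged into one kernel-verified Lean document; each statement's English description precedes it below -/
import Mathlib

section
/- Let X be a bifurcating Markov chain with kernel P and induced kernel Q, started at x. For bounded measurable f, g and n ≥ m ≥ 0, E_x[M_{G_n}(f) M_{G_m}(g)] = 2ⁿ Q^m( g · Q^{n-m} f )(x) + Σ_{k=0}^{m-1} 2^{n+k} Q^{m-k-1}( P( Q^k g ⊗_sym Q^{n-m+k} f ) )(x), where ⊗_sym denotes symmetrized tensor: u ⊗_sym v = (1/2)(u⊗v + v⊗u). -/
open MeasureTheory ProbabilityTheory ENNReal Filter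

noncomputable section

/-- Nodes of the full binary tree: a node of generation `n` is a word
`Fin n → Bool`. -/
abbrev TreeNode : Type := Σ n : ℕ, (Fin n → Bool)

/-- The root `∅` of the binary tree. -/
def rootNode : TreeNode := ⟨0, fun i => i.elim0⟩

/-- The child of the node `i` of generation `k` obtained by appending bit `b`. -/
def childNode {k : ℕ} (i : Fin k → Bool) (b : Bool) : TreeNode := ⟨k + 1, Fin.snoc i b⟩

/-- The action of the marginal mixture kernel `Q = (P₀ + P₁)/2` on real functions. -/
def QR {S : Type*} [MeasurableSpace S] (P : Kernel S (S × S)) (f : S → ℝ) (x : S) : ℝ :=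
  (∫ yz, f yz.1 ∂(P x) + ∫ yz, f yz.2 ∂(P x)) / 2

/-- `n`-th iterate of `Q` acting on real functions. -/
def QRiter {S : Type*} [MeasurableSpace S] (P : Kernel S (S × S)) (n : ℕ) (f : S → ℝ) : S → ℝ :=
  (QR P)^[n] f

/-- `X` is a bifurcating Markov chain on `S` with kernel `P`, on the probability
space `(Ω, m)`: every `X_i` is measurable and the branching Markov property
holds, expressed by integrating bounded measurable functionals of the tree up to
generation `k` against products over generation `k` of functions of
`(X_i, X_{i0}, X_{i1})`. -/
def IsBMC {S Ω : Type*} [MeasurableSpace S] [MeasurableSpace Ω] (m : Measure Ω)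
    (P : Kernel S (S × S)) (X : TreeNode → Ω → S) : Prop :=
  (∀ p : TreeNode, Measurable (X p)) ∧
  ∀ (k : ℕ) (g : (Fin k → Bool) → S → S → S → ℝ),
    (∀ i, Measurable fun p : S × S × S => g i p.1 p.2.1 p.2.2) →
    (∀ i, ∃ C, ∀ a b c, |g i a b c| ≤ C) →
    ∀ F : ({p : TreeNode // p.1 ≤ k} → S) → ℝ,
      Measurable F → (∃ C, ∀ v, |F v| ≤ C) →
      ∫ ω, (∏ i : Fin k → Bool,
          g i (X ⟨k, i⟩ ω) (X (childNode i false) ω) (X (childNode i true) ω))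
          * F (fun p => X p.1 ω) ∂m
      = ∫ ω, (∏ i : Fin k → Bool,
          ∫ yz, g i (X ⟨k, i⟩ ω) yz.1 yz.2 ∂(P (X ⟨k, i⟩ ω)))
          * F (fun p => X p.1 ω) ∂m

section Toolkit

variable {S : Type*} [MeasurableSpace S] (P : Kernel S (S × S)) [IsMarkovKernel P]

/-- bounded measurable real functions -/
def Nice {α : Type*} [MeasurableSpace α] (f : α → ℝ) : Prop :=
  Measurable f ∧ ∃ C, ∀ y, |f y| ≤ C

lemma Nice.meas {α : Type*} [MeasurableSpace α] {f : α → ℝ} (h : Nice f) : Measurable f := h.1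

lemma nice_integrable {α : Type*} [MeasurableSpace α] {f : α → ℝ} (h : Nice f)
    (μ : Measure α) [IsFiniteMeasure μ] : Integrable f μ := by
  obtain ⟨C, hC⟩ := h.2
  exact (integrable_const C).mono' h.1.aestronglyMeasurable (ae_of_all _ fun y => by
    simpa using hC y)

lemma nice_abs_integral_le {α : Type*} [MeasurableSpace α] {f : α → ℝ} {C : ℝ}
    (hC : ∀ y, |f y| ≤ C) (μ : Measure α) [IsProbabilityMeasure μ] :
    |∫ y, f y ∂μ| ≤ C := by
  have := norm_integral_le_of_norm_le_const (μ := μ) (f := f) (C := C)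
    (ae_of_all _ fun y => by simpa using hC y)
  simpa using this

/-- integral of a nice function of the pair against the kernel, as a function of the point -/
lemma nice_kernel_integral {φ : S × S → ℝ} (hφ : Nice φ) :
    Nice (fun x => ∫ yz, φ yz ∂(P x)) := by
  constructor
  · have : StronglyMeasurable fun p : S × (S × S) => φ p.2 :=
      (hφ.1.comp measurable_snd).stronglyMeasurable
    exact (this.integral_kernel_prod_right' (κ := P)).measurable
  · obtain ⟨C, hC⟩ := hφ.2
    exact ⟨C, fun x => nice_abs_integral_le hC _⟩

lemma Nice.fst {φ : S → ℝ} (h : Nice φ) : Nice (fun yz : S × S => φ yz.1) :=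
  ⟨h.1.comp measurable_fst, h.2.imp fun C hC yz => hC _⟩

lemma Nice.snd {φ : S → ℝ} (h : Nice φ) : Nice (fun yz : S × S => φ yz.2) :=
  ⟨h.1.comp measurable_snd, h.2.imp fun C hC yz => hC _⟩

lemma Nice.add {α : Type*} [MeasurableSpace α] {f g : α → ℝ} (hf : Nice f) (hg : Nice g) :
    Nice (fun y => f y + g y) := by
  refine ⟨hf.1.add hg.1, ?_⟩
  obtain ⟨C, hC⟩ := hf.2; obtain ⟨D, hD⟩ := hg.2
  exact ⟨C + D, fun y => (abs_add_le _ _).trans (add_le_add (hC y) (hD y))⟩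

lemma Nice.mul {α : Type*} [MeasurableSpace α] {f g : α → ℝ} (hf : Nice f) (hg : Nice g) :
    Nice (fun y => f y * g y) := by
  refine ⟨hf.1.mul hg.1, ?_⟩
  obtain ⟨C, hC⟩ := hf.2; obtain ⟨D, hD⟩ := hg.2
  refine ⟨C * D, fun y => ?_⟩
  rw [abs_mul]
  have h0 : (0:ℝ) ≤ C := le_trans (abs_nonneg _) (hC y)
  exact mul_le_mul (hC y) (hD y) (abs_nonneg _) h0

lemma nice_const {α : Type*} [MeasurableSpace α] (c : ℝ) : Nice (fun _ : α => c) :=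
  ⟨measurable_const, ⟨|c|, fun _ => le_refl _⟩⟩

lemma Nice.const_mul {α : Type*} [MeasurableSpace α] {f : α → ℝ} (hf : Nice f) (c : ℝ) :
    Nice (fun y => c * f y) := Nice.mul (nice_const c) hf

lemma Nice.neg {α : Type*} [MeasurableSpace α] {f : α → ℝ} (hf : Nice f) :
    Nice (fun y => -f y) := by
  have := hf.const_mul (-1)
  simpa using this

lemma Nice.sub {α : Type*} [MeasurableSpace α] {f g : α → ℝ} (hf : Nice f) (hg : Nice g) :
    Nice (fun y => f y - g y) := by
  have := hf.add hg.neg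
  simpa [sub_eq_add_neg] using this

lemma nice_QR {f : S → ℝ} (hf : Nice f) : Nice (QR P f) := by
  have h1 := nice_kernel_integral P hf.fst
  have h2 := nice_kernel_integral P hf.snd
  have : QR P f = fun x => ((fun x => ∫ yz, f yz.1 ∂(P x)) x + (fun x => ∫ yz, f yz.2 ∂(P x)) x) * (1/2) := by
    funext x; simp only [QR]; ring
  rw [this]
  exact Nice.mul (h1.add h2) (nice_const _)

lemma nice_QRiter {f : S → ℝ} (hf : Nice f) (n : ℕ) : Nice (QRiter P n f) := by
  induction n generalizing f with
  | zero => exact hf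
  | succ k ih =>
    rw [QRiter, Function.iterate_succ_apply]
    exact ih (nice_QR P hf)

lemma QRiter_succ_apply (f : S → ℝ) (n : ℕ) :
    QRiter P (n + 1) f = QRiter P n (QR P f) := by
  rw [QRiter, Function.iterate_succ_apply]; rfl

lemma QRiter_add_apply (f : S → ℝ) (a b : ℕ) :
    QRiter P (a + b) f = QRiter P a (QRiter P b f) := by
  rw [QRiter, Function.iterate_add_apply]; rfl

lemma QR_add {f g : S → ℝ} (hf : Nice f) (hg : Nice g) :
    QR P (fun y => f y + g y) = fun x => QR P f x + QR P g x := by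
  funext x
  have if1 := nice_integrable hf.fst (P x)
  have if2 := nice_integrable hf.snd (P x)
  have ig1 := nice_integrable hg.fst (P x)
  have ig2 := nice_integrable hg.snd (P x)
  simp only [QR]
  rw [integral_add if1 ig1, integral_add if2 ig2]
  ring

lemma QR_const_mul (f : S → ℝ) (c : ℝ) :
    QR P (fun y => c * f y) = fun x => c * QR P f x := by
  funext x
  simp only [QR, integral_const_mul]
  ring

lemma QRiter_add_fun {f g : S → ℝ} (hf : Nice f) (hg : Nice g) (n : ℕ) :
    QRiter P n (fun y => f y + g y) = fun x => QRiter P n f x + QRiter P n g x := by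
  induction n generalizing f g with
  | zero => rfl
  | succ k ih =>
    rw [QRiter_succ_apply, QRiter_succ_apply, QRiter_succ_apply, QR_add P hf hg]
    exact ih (nice_QR P hf) (nice_QR P hg)

lemma QRiter_const_mul (f : S → ℝ) (c : ℝ) (n : ℕ) :
    QRiter P n (fun y => c * f y) = fun x => c * QRiter P n f x := by
  induction n generalizing f with
  | zero => rfl
  | succ k ih =>
    rw [QRiter_succ_apply, QRiter_succ_apply, QR_const_mul]
    exact ih _

end Toolkit

section BMC

variable {S Ω : Type*} [MeasurableSpace S] [MeasurableSpace Ω]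
  (mΩ : Measure Ω) [IsProbabilityMeasure mΩ]
  (P : Kernel S (S × S)) [IsMarkovKernel P]
  (X : TreeNode → Ω → S)

/-- generation sum -/
def MG (X : TreeNode → Ω → S) (n : ℕ) (h : S → ℝ) (ω : Ω) : ℝ :=
  ∑ i : Fin n → Bool, h (X ⟨n, i⟩ ω)

/-- symmetrized tensor integral -/
def TT {S : Type*} [MeasurableSpace S] (P : Kernel S (S × S)) (u v : S → ℝ) (y : S) : ℝ :=
  ∫ yz, (u yz.1 * v yz.2 + v yz.1 * u yz.2) / 2 ∂(P y)

lemma nice_sum {ι α : Type*} [MeasurableSpace α] (s : Finset ι) (f : ι → α → ℝ)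
    (hf : ∀ i ∈ s, Nice (f i)) : Nice (fun y => ∑ i ∈ s, f i y) := by
  classical
  induction s using Finset.induction_on with
  | empty => simpa using nice_const (α := α) 0
  | @insert a s' ha ih =>
    simp only [Finset.sum_insert ha]
    exact (hf a (Finset.mem_insert_self _ _)).add
      (ih fun i hi => hf i (Finset.mem_insert_of_mem hi))

lemma nice_node (hX : IsBMC mΩ P X) (p : TreeNode) {h : S → ℝ} (hh : Nice h) :
    Nice (fun ω => h (X p ω)) :=
  ⟨hh.1.comp (hX.1 p), hh.2.imp fun _ hC ω => hC _⟩

lemma nice_MG (hX : IsBMC mΩ P X) (n : ℕ) {h : S → ℝ} (hh : Nice h) :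
    Nice (MG X n h) :=
  nice_sum _ _ fun i _ => nice_node mΩ P X hX ⟨n, i⟩ hh

lemma nice_TT {u v : S → ℝ} (hu : Nice u) (hv : Nice v) : Nice (TT P u v) := by
  have h : Nice (fun yz : S × S => (u yz.1 * v yz.2 + v yz.1 * u yz.2) / 2) := by
    have := ((hu.fst.mul hv.snd).add (hv.fst.mul hu.snd)).mul (nice_const (2⁻¹ : ℝ))
    simpa [div_eq_mul_inv] using this
  exact nice_kernel_integral P h

lemma TT_comm (u v : S → ℝ) : TT P u v = TT P v u := by
  funext y
  unfold TT
  congr 1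
  funext yz
  ring

lemma MG_succ (h : S → ℝ) (k : ℕ) (ω : Ω) :
    MG X (k + 1) h ω
      = ∑ i : Fin k → Bool,
          (h (X (childNode i false) ω) + h (X (childNode i true) ω)) := by
  rw [MG, ← Equiv.sum_comp (Fin.snocEquiv (fun _ : Fin (k + 1) => Bool))
    (fun i => h (X ⟨k + 1, i⟩ ω)), Fintype.sum_prod_type, Fintype.sum_bool]
  rw [← Finset.sum_add_distrib]
  refine Finset.sum_congr rfl fun i _ => ?_
  rw [add_comm]
  rfl

lemma MG_zero (x : S) (hroot : ∀ ω, X rootNode ω = x) (h : S → ℝ) (ω : Ω) :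
    MG X 0 h ω = h x := by
  rw [MG]
  have key : ∀ i : Fin 0 → Bool, h (X ⟨0, i⟩ ω) = h x := by
    intro i
    have hi : (⟨0, i⟩ : TreeNode) = rootNode :=
      congrArg (Sigma.mk 0) (Subsingleton.elim _ _)
    rw [hi, hroot]
  rw [Finset.sum_congr rfl fun i _ => key i]
  simp

/-- The branching Markov property for a single node, with a functional of the tree. -/
lemma bmc_single_F (hX : IsBMC mΩ P X) (k : ℕ) (a : Fin k → Bool) (φ : S → S → ℝ)
    (hφ : Nice (fun yz : S × S => φ yz.1 yz.2))
    (F : ({p : TreeNode // p.1 ≤ k} → S) → ℝ) (hFm : Measurable F)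
    (hFb : ∃ C, ∀ v, |F v| ≤ C) :
    ∫ ω, φ (X (childNode a false) ω) (X (childNode a true) ω) * F (fun p => X p.1 ω) ∂mΩ
      = ∫ ω, (∫ yz, φ yz.1 yz.2 ∂(P (X ⟨k, a⟩ ω))) * F (fun p => X p.1 ω) ∂mΩ := by
  classical
  obtain ⟨C, hC⟩ := hφ.2
  have hm : ∀ i : Fin k → Bool,
      Measurable fun p : S × S × S => (if i = a then φ p.2.1 p.2.2 else 1 : ℝ) := by
    intro i
    by_cases h : i = a
    · simp only [h, if_true]
      exact hφ.1.comp ((measurable_fst.comp measurable_snd).prodMk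
        (measurable_snd.comp measurable_snd))
    · simp only [h, if_false]
      exact measurable_const
  have hb : ∀ i : Fin k → Bool,
      ∃ C, ∀ (x b c : S), |(if i = a then φ b c else 1 : ℝ)| ≤ C := by
    intro i
    refine ⟨max C 1, fun x b c => ?_⟩
    by_cases h : i = a
    · simp only [h, if_true]
      exact (hC (b, c)).trans (le_max_left _ _)
    · simp only [h, if_false, abs_one]
      exact le_max_right _ _
  have E := hX.2 k (fun i _ b c => if i = a then φ b c else 1) hm hb F hFm hFb
  have key : ∀ (y : S) (i : Fin k → Bool),
      ∫ yz : S × S, (if i = a then φ yz.1 yz.2 else 1 : ℝ) ∂(P y)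
        = if i = a then ∫ yz, φ yz.1 yz.2 ∂(P y) else 1 := by
    intro y i
    by_cases h : i = a <;> simp [h]
  simp only [key, Finset.prod_ite_eq', Finset.mem_univ, if_true] at E
  exact E

/-- The branching Markov property for a pair of distinct nodes. -/
lemma bmc_pair (hX : IsBMC mΩ P X) (k : ℕ) (a b : Fin k → Bool) (hab : a ≠ b)
    (φ ψ : S → S → ℝ) (hφ : Nice (fun yz : S × S => φ yz.1 yz.2))
    (hψ : Nice (fun yz : S × S => ψ yz.1 yz.2)) :
    ∫ ω, φ (X (childNode a false) ω) (X (childNode a true) ω)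
        * ψ (X (childNode b false) ω) (X (childNode b true) ω) ∂mΩ
      = ∫ ω, (∫ yz, φ yz.1 yz.2 ∂(P (X ⟨k, a⟩ ω)))
          * (∫ yz, ψ yz.1 yz.2 ∂(P (X ⟨k, b⟩ ω))) ∂mΩ := by
  classical
  obtain ⟨C, hC⟩ := hφ.2
  obtain ⟨D, hD⟩ := hψ.2
  have hm : ∀ i : Fin k → Bool,
      Measurable fun p : S × S × S =>
        ((if i = a then φ p.2.1 p.2.2 else 1) * (if i = b then ψ p.2.1 p.2.2 else 1) : ℝ) := by
    intro i
    have h1 : Measurable fun p : S × S × S => (if i = a then φ p.2.1 p.2.2 else 1 : ℝ) := by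
      by_cases h : i = a
      · simp only [h, if_true]
        exact hφ.1.comp ((measurable_fst.comp measurable_snd).prodMk
          (measurable_snd.comp measurable_snd))
      · simp only [h, if_false]; exact measurable_const
    have h2 : Measurable fun p : S × S × S => (if i = b then ψ p.2.1 p.2.2 else 1 : ℝ) := by
      by_cases h : i = b
      · simp only [h, if_true]
        exact hψ.1.comp ((measurable_fst.comp measurable_snd).prodMk
          (measurable_snd.comp measurable_snd))
      · simp only [h, if_false]; exact measurable_const
    exact h1.mul h2
  have hbd : ∀ i : Fin k → Bool,
      ∃ E, ∀ (x y z : S), |((if i = a then φ y z else 1) * (if i = b then ψ y z else 1) : ℝ)| ≤ E := by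
    intro i
    refine ⟨max C 1 * max D 1, fun x y z => ?_⟩
    rw [abs_mul]
    have h1 : |(if i = a then φ y z else 1 : ℝ)| ≤ max C 1 := by
      by_cases h : i = a
      · simp only [h, if_true]; exact (hC (y, z)).trans (le_max_left _ _)
      · simp only [h, if_false, abs_one]; exact le_max_right _ _
    have h2 : |(if i = b then ψ y z else 1 : ℝ)| ≤ max D 1 := by
      by_cases h : i = b
      · simp only [h, if_true]; exact (hD (y, z)).trans (le_max_left _ _)
      · simp only [h, if_false, abs_one]; exact le_max_right _ _
    exact mul_le_mul h1 h2 (abs_nonneg _) (le_trans (abs_nonneg _) h1)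
  have E := hX.2 k
    (fun i _ y z => (if i = a then φ y z else 1) * (if i = b then ψ y z else 1))
    hm hbd (fun _ => 1) measurable_const ⟨1, fun _ => by simp⟩
  have key : ∀ (y : S) (i : Fin k → Bool),
      ∫ yz : S × S,
          ((if i = a then φ yz.1 yz.2 else 1) * (if i = b then ψ yz.1 yz.2 else 1) : ℝ) ∂(P y)
        = (if i = a then ∫ yz, φ yz.1 yz.2 ∂(P y) else 1)
            * (if i = b then ∫ yz, ψ yz.1 yz.2 ∂(P y) else 1) := by
    intro y i
    by_cases h1 : i = a
    · have h2 : i ≠ b := h1 ▸ hab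
      simp [h1, h2, hab]
    · by_cases h2 : i = b <;> simp [h1, h2, hab, Ne.symm hab]
  simp only [key, Finset.prod_mul_distrib, Finset.prod_ite_eq', Finset.mem_univ, if_true,
    mul_one] at E
  exact E

end BMC

section BMC2

variable {S Ω : Type*} [MeasurableSpace S] [MeasurableSpace Ω]
  (mΩ : Measure Ω) [IsProbabilityMeasure mΩ]
  (P : Kernel S (S × S)) [IsMarkovKernel P]
  (X : TreeNode → Ω → S)

lemma QRiter_zero (f : S → ℝ) : QRiter P 0 f = f := rfl

lemma bmc_single (hX : IsBMC mΩ P X) (k : ℕ) (a : Fin k → Bool) (φ : S → S → ℝ)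
    (hφ : Nice (fun yz : S × S => φ yz.1 yz.2)) :
    ∫ ω, φ (X (childNode a false) ω) (X (childNode a true) ω) ∂mΩ
      = ∫ ω, (∫ yz, φ yz.1 yz.2 ∂(P (X ⟨k, a⟩ ω))) ∂mΩ := by
  have := bmc_single_F mΩ P X hX k a φ hφ (fun _ => 1) measurable_const ⟨1, fun _ => by simp⟩
  simpa using this

lemma QR_two {f : S → ℝ} (hf : Nice f) (y : S) :
    ∫ yz, (f yz.1 + f yz.2) ∂(P y) = 2 * QR P f y := by
  rw [integral_add (nice_integrable hf.fst _) (nice_integrable hf.snd _), QR]; ring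

lemma integral_MG (hX : IsBMC mΩ P X) (x : S) (hroot : ∀ ω, X rootNode ω = x) (j : ℕ) :
    ∀ {h : S → ℝ}, Nice h → ∫ ω, MG X j h ω ∂mΩ = 2 ^ j * QRiter P j h x := by
  induction j with
  | zero =>
    intro h hh
    simp only [MG_zero (X := X) x hroot]
    simp [QRiter]
  | succ j ih =>
    intro h hh
    have int1 : ∀ a : Fin j → Bool,
        Integrable (fun ω => h (X (childNode a false) ω) + h (X (childNode a true) ω)) mΩ :=
      fun a => nice_integrable
        ((nice_node mΩ P X hX _ hh).add (nice_node mΩ P X hX _ hh)) mΩ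
    calc ∫ ω, MG X (j + 1) h ω ∂mΩ
        = ∫ ω, ∑ a : Fin j → Bool,
            (h (X (childNode a false) ω) + h (X (childNode a true) ω)) ∂mΩ := by
          simp only [MG_succ]
      _ = ∑ a : Fin j → Bool,
            ∫ ω, (h (X (childNode a false) ω) + h (X (childNode a true) ω)) ∂mΩ :=
          integral_finset_sum _ fun a _ => int1 a
      _ = ∑ a : Fin j → Bool, ∫ ω, (∫ yz, (h yz.1 + h yz.2) ∂(P (X ⟨j, a⟩ ω))) ∂mΩ :=
          Finset.sum_congr rfl fun a _ =>
            bmc_single mΩ P X hX j a (fun b c => h b + h c) (hh.fst.add hh.snd)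
      _ = ∑ a : Fin j → Bool, ∫ ω, 2 * QR P h (X ⟨j, a⟩ ω) ∂mΩ := by
          simp only [QR_two P hh]
      _ = 2 * ∑ a : Fin j → Bool, ∫ ω, QR P h (X ⟨j, a⟩ ω) ∂mΩ := by
          rw [Finset.mul_sum]
          exact Finset.sum_congr rfl fun a _ => integral_const_mul 2 _
      _ = 2 * ∫ ω, MG X j (QR P h) ω ∂mΩ := by
          rw [← integral_finset_sum _ fun a _ =>
            nice_integrable (nice_node mΩ P X hX _ (nice_QR P hh)) mΩ]
          rfl
      _ = 2 ^ (j + 1) * QRiter P (j + 1) h x := by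
          rw [ih (nice_QR P hh), QRiter_succ_apply]
          ring

lemma MG_reduce (hX : IsBMC mΩ P X) (m j : ℕ) (hmj : m ≤ j) {f g : S → ℝ}
    (hf : Nice f) (hg : Nice g) :
    ∫ ω, MG X (j + 1) f ω * MG X m g ω ∂mΩ
      = 2 * ∫ ω, MG X j (QR P f) ω * MG X m g ω ∂mΩ := by
  have hMGg := nice_MG mΩ P X hX m hg
  have intA : ∀ a : Fin j → Bool,
      Integrable (fun ω => (f (X (childNode a false) ω) + f (X (childNode a true) ω))
        * MG X m g ω) mΩ :=
    fun a => nice_integrable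
      (((nice_node mΩ P X hX _ hf).add (nice_node mΩ P X hX _ hf)).mul hMGg) mΩ
  have key : ∀ a : Fin j → Bool,
      ∫ ω, (f (X (childNode a false) ω) + f (X (childNode a true) ω)) * MG X m g ω ∂mΩ
        = ∫ ω, (∫ yz, (f yz.1 + f yz.2) ∂(P (X ⟨j, a⟩ ω))) * MG X m g ω ∂mΩ := by
    intro a
    have hFm : Measurable fun v : {p : TreeNode // p.1 ≤ j} → S =>
        ∑ i : Fin m → Bool, g (v ⟨⟨m, i⟩, hmj⟩) :=
      Finset.measurable_sum _ fun i _ => hg.1.comp (measurable_pi_apply _)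
    have hFb : ∃ C, ∀ v : {p : TreeNode // p.1 ≤ j} → S,
        |∑ i : Fin m → Bool, g (v ⟨⟨m, i⟩, hmj⟩)| ≤ C := by
      obtain ⟨C, hC⟩ := hg.2
      refine ⟨((Finset.univ : Finset (Fin m → Bool)).card : ℝ) * C, fun v => ?_⟩
      calc |∑ i : Fin m → Bool, g (v ⟨⟨m, i⟩, hmj⟩)|
          ≤ ∑ i : Fin m → Bool, |g (v ⟨⟨m, i⟩, hmj⟩)| := Finset.abs_sum_le_sum_abs _ _
        _ ≤ ((Finset.univ : Finset (Fin m → Bool)).card : ℝ) * C := by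
            rw [← nsmul_eq_mul]
            exact Finset.sum_le_card_nsmul _ _ _ fun i _ => hC _
    exact bmc_single_F mΩ P X hX j a (fun b c => f b + f c) (hf.fst.add hf.snd)
      (fun v => ∑ i : Fin m → Bool, g (v ⟨⟨m, i⟩, hmj⟩)) hFm hFb
  calc ∫ ω, MG X (j + 1) f ω * MG X m g ω ∂mΩ
      = ∫ ω, ∑ a : Fin j → Bool,
          (f (X (childNode a false) ω) + f (X (childNode a true) ω)) * MG X m g ω ∂mΩ := by
        congr 1; funext ω; rw [MG_succ, Finset.sum_mul]
    _ = ∑ a : Fin j → Bool,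
          ∫ ω, (f (X (childNode a false) ω) + f (X (childNode a true) ω)) * MG X m g ω ∂mΩ :=
        integral_finset_sum _ fun a _ => intA a
    _ = ∑ a : Fin j → Bool,
          ∫ ω, (∫ yz, (f yz.1 + f yz.2) ∂(P (X ⟨j, a⟩ ω))) * MG X m g ω ∂mΩ :=
        Finset.sum_congr rfl fun a _ => key a
    _ = ∑ a : Fin j → Bool, 2 * ∫ ω, QR P f (X ⟨j, a⟩ ω) * MG X m g ω ∂mΩ := by
        refine Finset.sum_congr rfl fun a _ => ?_
        rw [← integral_const_mul]
        congr 1; funext ω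
        rw [QR_two P hf]; ring
    _ = 2 * ∑ a : Fin j → Bool, ∫ ω, QR P f (X ⟨j, a⟩ ω) * MG X m g ω ∂mΩ := by
        rw [Finset.mul_sum]
    _ = 2 * ∫ ω, MG X j (QR P f) ω * MG X m g ω ∂mΩ := by
        have hpt : ∀ ω, MG X j (QR P f) ω * MG X m g ω
            = ∑ a : Fin j → Bool, QR P f (X ⟨j, a⟩ ω) * MG X m g ω := fun ω => by
          rw [MG, Finset.sum_mul]
        simp only [hpt]
        rw [integral_finset_sum _ fun a _ => nice_integrable
          ((nice_node mΩ P X hX _ (nice_QR P hf)).mul hMGg) mΩ]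

lemma MG_mixed_reduce (hX : IsBMC mΩ P X) (m : ℕ) {g : S → ℝ} (hg : Nice g) :
    ∀ (d : ℕ) {f : S → ℝ}, Nice f →
      ∫ ω, MG X (m + d) f ω * MG X m g ω ∂mΩ
        = 2 ^ d * ∫ ω, MG X m (QRiter P d f) ω * MG X m g ω ∂mΩ := by
  intro d
  induction d with
  | zero => intro f hf; simp [QRiter]
  | succ d ih =>
    intro f hf
    calc ∫ ω, MG X (m + d + 1) f ω * MG X m g ω ∂mΩ
        = 2 * ∫ ω, MG X (m + d) (QR P f) ω * MG X m g ω ∂mΩ :=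
          MG_reduce mΩ P X hX m (m + d) (Nat.le_add_right m d) hf hg
      _ = 2 * (2 ^ d * ∫ ω, MG X m (QRiter P d (QR P f)) ω * MG X m g ω ∂mΩ) := by
          rw [ih (nice_QR P hf)]
      _ = 2 ^ (d + 1) * ∫ ω, MG X m (QRiter P (d + 1) f) ω * MG X m g ω ∂mΩ := by
          rw [QRiter_succ_apply]; ring

end BMC2

section BMC3

variable {S Ω : Type*} [MeasurableSpace S] [MeasurableSpace Ω]
  (mΩ : Measure Ω) [IsProbabilityMeasure mΩ]
  (P : Kernel S (S × S)) [IsMarkovKernel P]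
  (X : TreeNode → Ω → S)

lemma MG_succ_rec (hX : IsBMC mΩ P X) (m : ℕ) {u v : S → ℝ} (hu : Nice u) (hv : Nice v) :
    ∫ ω, MG X (m + 1) u ω * MG X (m + 1) v ω ∂mΩ
      = 4 * ∫ ω, MG X m (QR P u) ω * MG X m (QR P v) ω ∂mΩ
        + ∫ ω, MG X m (fun y =>
            (∫ yz, (u yz.1 + u yz.2) * (v yz.1 + v yz.2) ∂(P y))
              - 4 * (QR P u y * QR P v y)) ω ∂mΩ := by
  classical
  have hQu := nice_QR P hu
  have hQv := nice_QR P hv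
  have hWnice : Nice (fun y => ∫ yz, (u yz.1 + u yz.2) * (v yz.1 + v yz.2) ∂(P y)) :=
    nice_kernel_integral P ((hu.fst.add hu.snd).mul (hv.fst.add hv.snd))
  have intAB : ∀ a b : Fin m → Bool,
      Integrable (fun ω => (u (X (childNode a false) ω) + u (X (childNode a true) ω))
        * (v (X (childNode b false) ω) + v (X (childNode b true) ω))) mΩ :=
    fun a b => nice_integrable
      (((nice_node mΩ P X hX _ hu).add (nice_node mΩ P X hX _ hu)).mul
        ((nice_node mΩ P X hX _ hv).add (nice_node mΩ P X hX _ hv))) mΩ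
  have intI : ∀ a b : Fin m → Bool,
      Integrable (fun ω => QR P u (X ⟨m, a⟩ ω) * QR P v (X ⟨m, b⟩ ω)) mΩ :=
    fun a b => nice_integrable
      ((nice_node mΩ P X hX _ hQu).mul (nice_node mΩ P X hX _ hQv)) mΩ
  have intD : ∀ a : Fin m → Bool,
      Integrable (fun ω => (∫ yz, (u yz.1 + u yz.2) * (v yz.1 + v yz.2) ∂(P (X ⟨m, a⟩ ω)))
        - 4 * (QR P u (X ⟨m, a⟩ ω) * QR P v (X ⟨m, a⟩ ω))) mΩ :=
    fun a => nice_integrable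
      ((nice_node mΩ P X hX _ hWnice).sub
        (((nice_node mΩ P X hX _ hQu).mul (nice_node mΩ P X hX _ hQv)).const_mul 4)) mΩ
  have key : ∀ a b : Fin m → Bool,
      ∫ ω, (u (X (childNode a false) ω) + u (X (childNode a true) ω))
          * (v (X (childNode b false) ω) + v (X (childNode b true) ω)) ∂mΩ
        = 4 * ∫ ω, QR P u (X ⟨m, a⟩ ω) * QR P v (X ⟨m, b⟩ ω) ∂mΩ
            + (if a = b then
                ∫ ω, ((∫ yz, (u yz.1 + u yz.2) * (v yz.1 + v yz.2) ∂(P (X ⟨m, a⟩ ω)))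
                  - 4 * (QR P u (X ⟨m, a⟩ ω) * QR P v (X ⟨m, a⟩ ω))) ∂mΩ
              else 0) := by
    intro a b
    by_cases hab : a = b
    · subst hab
      rw [if_pos rfl]
      have h1 := bmc_single mΩ P X hX m a (fun y z => (u y + u z) * (v y + v z))
        ((hu.fst.add hu.snd).mul (hv.fst.add hv.snd))
      rw [h1]
      rw [integral_sub (nice_integrable (nice_node mΩ P X hX _ hWnice) mΩ)
        (nice_integrable
          (((nice_node mΩ P X hX _ hQu).mul (nice_node mΩ P X hX _ hQv)).const_mul 4) mΩ),
        integral_const_mul]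
      ring
    · rw [if_neg hab, add_zero]
      have h1 := bmc_pair mΩ P X hX m a b hab (fun y z => u y + u z) (fun y z => v y + v z)
        (hu.fst.add hu.snd) (hv.fst.add hv.snd)
      rw [h1, ← integral_const_mul]
      congr 1; funext ω
      rw [QR_two P hu, QR_two P hv]
      ring
  have swapA : ∑ a : Fin m → Bool, ∑ b : Fin m → Bool,
        ∫ ω, QR P u (X ⟨m, a⟩ ω) * QR P v (X ⟨m, b⟩ ω) ∂mΩ
      = ∫ ω, MG X m (QR P u) ω * MG X m (QR P v) ω ∂mΩ := by
    have hpt : ∀ ω, MG X m (QR P u) ω * MG X m (QR P v) ω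
        = ∑ a : Fin m → Bool, ∑ b : Fin m → Bool,
            QR P u (X ⟨m, a⟩ ω) * QR P v (X ⟨m, b⟩ ω) := fun ω => by
      rw [MG, MG, Finset.sum_mul_sum]
    simp only [hpt]
    rw [integral_finset_sum _ fun a _ => integrable_finset_sum _ fun b _ => intI a b]
    exact Finset.sum_congr rfl fun a _ => (integral_finset_sum _ fun b _ => intI a b).symm
  have swapB : ∑ a : Fin m → Bool,
        ∫ ω, ((∫ yz, (u yz.1 + u yz.2) * (v yz.1 + v yz.2) ∂(P (X ⟨m, a⟩ ω)))
          - 4 * (QR P u (X ⟨m, a⟩ ω) * QR P v (X ⟨m, a⟩ ω))) ∂mΩ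
      = ∫ ω, MG X m (fun y =>
          (∫ yz, (u yz.1 + u yz.2) * (v yz.1 + v yz.2) ∂(P y))
            - 4 * (QR P u y * QR P v y)) ω ∂mΩ := by
    rw [← integral_finset_sum _ fun a _ => intD a]
    rfl
  calc ∫ ω, MG X (m + 1) u ω * MG X (m + 1) v ω ∂mΩ
      = ∫ ω, ∑ a : Fin m → Bool, ∑ b : Fin m → Bool,
          (u (X (childNode a false) ω) + u (X (childNode a true) ω))
            * (v (X (childNode b false) ω) + v (X (childNode b true) ω)) ∂mΩ := by
        simp only [MG_succ, Finset.sum_mul_sum]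
    _ = ∑ a : Fin m → Bool, ∑ b : Fin m → Bool,
          ∫ ω, (u (X (childNode a false) ω) + u (X (childNode a true) ω))
            * (v (X (childNode b false) ω) + v (X (childNode b true) ω)) ∂mΩ := by
        rw [integral_finset_sum _ fun a _ => integrable_finset_sum _ fun b _ => intAB a b]
        exact Finset.sum_congr rfl fun a _ => integral_finset_sum _ fun b _ => intAB a b
    _ = ∑ a : Fin m → Bool, ∑ b : Fin m → Bool,
          (4 * ∫ ω, QR P u (X ⟨m, a⟩ ω) * QR P v (X ⟨m, b⟩ ω) ∂mΩ
            + (if a = b then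
                ∫ ω, ((∫ yz, (u yz.1 + u yz.2) * (v yz.1 + v yz.2) ∂(P (X ⟨m, a⟩ ω)))
                  - 4 * (QR P u (X ⟨m, a⟩ ω) * QR P v (X ⟨m, a⟩ ω))) ∂mΩ
              else 0)) :=
        Finset.sum_congr rfl fun a _ => Finset.sum_congr rfl fun b _ => key a b
    _ = 4 * (∑ a : Fin m → Bool, ∑ b : Fin m → Bool,
            ∫ ω, QR P u (X ⟨m, a⟩ ω) * QR P v (X ⟨m, b⟩ ω) ∂mΩ)
          + ∑ a : Fin m → Bool,
            ∫ ω, ((∫ yz, (u yz.1 + u yz.2) * (v yz.1 + v yz.2) ∂(P (X ⟨m, a⟩ ω)))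
              - 4 * (QR P u (X ⟨m, a⟩ ω) * QR P v (X ⟨m, a⟩ ω))) ∂mΩ := by
        rw [Finset.mul_sum, ← Finset.sum_add_distrib]
        refine Finset.sum_congr rfl fun a _ => ?_
        rw [Finset.sum_add_distrib, Finset.mul_sum, Finset.sum_ite_eq]
        simp
    _ = _ := by rw [swapA, swapB]

lemma W_decomp {u v : S → ℝ} (hu : Nice u) (hv : Nice v) :
    (fun y => (∫ yz, (u yz.1 + u yz.2) * (v yz.1 + v yz.2) ∂(P y))
        - 4 * (QR P u y * QR P v y))
      = fun y => 2 * QR P (fun z => u z * v z) y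
          + (2 * TT P u v y + (-4) * (QR P u y * QR P v y)) := by
  funext y
  have e1 : ∫ yz, (u yz.1 + u yz.2) * (v yz.1 + v yz.2) ∂(P y)
      = ∫ yz, ((u yz.1 * v yz.1 + u yz.2 * v yz.2)
          + (u yz.1 * v yz.2 + v yz.1 * u yz.2)) ∂(P y) := by
    congr 1; funext yz; ring
  have e2 : ∫ yz, ((u yz.1 * v yz.1 + u yz.2 * v yz.2)
        + (u yz.1 * v yz.2 + v yz.1 * u yz.2)) ∂(P y)
      = (∫ yz, (u yz.1 * v yz.1 + u yz.2 * v yz.2) ∂(P y))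
        + ∫ yz, (u yz.1 * v yz.2 + v yz.1 * u yz.2) ∂(P y) :=
    integral_add (nice_integrable ((hu.fst.mul hv.fst).add (hu.snd.mul hv.snd)) _)
      (nice_integrable ((hu.fst.mul hv.snd).add (hv.fst.mul hu.snd)) _)
  have e3 : ∫ yz, (u yz.1 * v yz.1 + u yz.2 * v yz.2) ∂(P y)
      = 2 * QR P (fun z => u z * v z) y := by
    rw [integral_add (nice_integrable (hu.fst.mul hv.fst) _)
      (nice_integrable (hu.snd.mul hv.snd) _)]
    simp only [QR]
    ring
  have e4 : ∫ yz, (u yz.1 * v yz.2 + v yz.1 * u yz.2) ∂(P y) = 2 * TT P u v y := by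
    rw [TT, integral_div]
    ring
  rw [e1, e2, e3, e4]
  ring

end BMC3

section BMC4

variable {S Ω : Type*} [MeasurableSpace S] [MeasurableSpace Ω]
  (mΩ : Measure Ω) [IsProbabilityMeasure mΩ]
  (P : Kernel S (S × S)) [IsMarkovKernel P]
  (X : TreeNode → Ω → S)

lemma MG_same (hX : IsBMC mΩ P X) (x : S) (hroot : ∀ ω, X rootNode ω = x) :
    ∀ (m : ℕ) {u v : S → ℝ}, Nice u → Nice v →
      ∫ ω, MG X m u ω * MG X m v ω ∂mΩ
        = 2 ^ m * QRiter P m (fun y => u y * v y) x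
          + ∑ k ∈ Finset.range m, 2 ^ (m + k) *
              QRiter P (m - k - 1) (TT P (QRiter P k u) (QRiter P k v)) x := by
  intro m
  induction m with
  | zero =>
    intro u v hu hv
    simp only [MG_zero (X := X) x hroot]
    simp [QRiter]
  | succ m ih =>
    intro u v hu hv
    have hQu := nice_QR P hu
    have hQv := nice_QR P hv
    have hA : Nice (fun y => 2 * QR P (fun z => u z * v z) y) :=
      (nice_QR P (hu.mul hv)).const_mul 2
    have hB : Nice (fun y => 2 * TT P u v y + (-4) * (QR P u y * QR P v y)) :=
      ((nice_TT P hu hv).const_mul 2).add ((hQu.mul hQv).const_mul (-4))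
    have hw : Nice (fun y =>
        (∫ yz, (u yz.1 + u yz.2) * (v yz.1 + v yz.2) ∂(P y))
          - 4 * (QR P u y * QR P v y)) := by
      rw [W_decomp P hu hv]
      exact hA.add hB
    rw [MG_succ_rec mΩ P X hX m hu hv, ih hQu hQv,
      integral_MG mΩ P X hX x hroot m hw, W_decomp P hu hv,
      QRiter_add_fun P hA hB m,
      QRiter_add_fun P ((nice_TT P hu hv).const_mul 2) ((hQu.mul hQv).const_mul (-4)) m,
      QRiter_const_mul P (QR P (fun z => u z * v z)) 2 m,
      QRiter_const_mul P (TT P u v) 2 m,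
      QRiter_const_mul P (fun y => QR P u y * QR P v y) (-4) m,
      ← QRiter_succ_apply]
    rw [Finset.sum_range_succ']
    have hshift : ∀ k ∈ Finset.range m,
        2 ^ (m + 1 + (k + 1)) *
            QRiter P (m + 1 - (k + 1) - 1)
              (TT P (QRiter P (k + 1) u) (QRiter P (k + 1) v)) x
          = 4 * (2 ^ (m + k) *
              QRiter P (m - k - 1)
                (TT P (QRiter P k (QR P u)) (QRiter P k (QR P v))) x) := by
      intro k hk
      rw [QRiter_succ_apply P u k, QRiter_succ_apply P v k,
        Nat.succ_sub_succ, show m + 1 + (k + 1) = (m + k) + 2 from by omega, pow_add]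
      ring
    rw [Finset.sum_congr rfl hshift, ← Finset.mul_sum]
    simp only [QRiter_zero, Nat.add_zero, Nat.sub_zero, Nat.add_sub_cancel]
    ring
end BMC4

/-- Mixed moment formula for a BMC started at `x`, for `n ≥ m`:
`E_x[M_{G_n}(f) M_{G_m}(g)] = 2ⁿ Q^m(g · Q^{n-m} f)(x)
  + ∑_{k<m} 2^{n+k} Q^{m-k-1}(P(Q^k g ⊗_sym Q^{n-m+k} f))(x)`. -/
theorem stmt7 {S Ω : Type*} [MeasurableSpace S] [MeasurableSpace Ω]
    (mΩ : Measure Ω) [IsProbabilityMeasure mΩ]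
    (P : Kernel S (S × S)) [IsMarkovKernel P]
    (X : TreeNode → Ω → S) (hX : IsBMC mΩ P X)
    (x : S) (hroot : ∀ ω, X rootNode ω = x)
    (f g : S → ℝ) (hfm : Measurable f) (hgm : Measurable g)
    (hfb : ∃ C, ∀ y, |f y| ≤ C) (hgb : ∃ C, ∀ y, |g y| ≤ C)
    (n m : ℕ) (hnm : m ≤ n) :
    ∫ ω, (∑ i : Fin n → Bool, f (X ⟨n, i⟩ ω)) * (∑ i : Fin m → Bool, g (X ⟨m, i⟩ ω)) ∂mΩ
      = 2 ^ n * QRiter P m (fun y => g y * QRiter P (n - m) f y) x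
        + ∑ k ∈ Finset.range m, 2 ^ (n + k) *
            QRiter P (m - k - 1)
              (fun y => ∫ yz,
                (QRiter P k g yz.1 * QRiter P (n - m + k) f yz.2
                  + QRiter P (n - m + k) f yz.1 * QRiter P k g yz.2) / 2 ∂(P y)) x := by
  have hfN : Nice f := ⟨hfm, hfb⟩
  have hgN : Nice g := ⟨hgm, hgb⟩
  obtain ⟨d, rfl⟩ : ∃ d, n = m + d := ⟨n - m, by omega⟩
  rw [Nat.add_sub_cancel_left]
  have hL : ∫ ω, (∑ i : Fin (m + d) → Bool, f (X ⟨m + d, i⟩ ω))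
        * (∑ i : Fin m → Bool, g (X ⟨m, i⟩ ω)) ∂mΩ
      = ∫ ω, MG X (m + d) f ω * MG X m g ω ∂mΩ := rfl
  rw [hL, MG_mixed_reduce mΩ P X hX m hgN d hfN,
    MG_same mΩ P X hX x hroot m (nice_QRiter P hfN d) hgN,
    mul_add, Finset.mul_sum]
  congr 1
  · rw [show (fun y => QRiter P d f y * g y) = fun y => g y * QRiter P d f y from
      funext fun y => mul_comm _ _]
    rw [← mul_assoc, ← pow_add, Nat.add_comm d m]
  · refine Finset.sum_congr rfl fun k hk => ?_
    rw [show (fun y => ∫ yz,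
          (QRiter P k g yz.1 * QRiter P (d + k) f yz.2
            + QRiter P (d + k) f yz.1 * QRiter P k g yz.2) / 2 ∂(P y))
        = TT P (QRiter P k g) (QRiter P (d + k) f) from rfl]
    rw [TT_comm P, show d + k = k + d from Nat.add_comm d k, QRiter_add_apply]
    rw [← mul_assoc, ← pow_add, show d + (m + k) = m + d + k from by omega]
end
end

section
/- Let X be a BMC with initial distribution ν and suppose νQ^{k₀} has a density ν₀ with respect to the Q-invariant probability measure μ with ‖ν₀‖_∞ < ∞. Then there is a finite constant C such that for all non-negative measurable f and all n ≥ k₀: (i) 2^{-n} E[M_{G_n}(f)] ≤ C ‖f‖_{L¹(μ)}, and (ii) 2^{-n} E[M_{G_n}(f)²] ≤ C Σ_{k=0}^{n} 2^k ‖Q^k f‖²_{L²(μ)}. -/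
open MeasureTheory ProbabilityTheory ENNReal Filter

noncomputable section

/-- The action of `Q = (P₀ + P₁)/2` on non-negative functions. -/
def QL {S : Type*} [MeasurableSpace S] (P : Kernel S (S × S)) (f : S → ℝ≥0∞) (x : S) : ℝ≥0∞ :=
  (∫⁻ yz, f yz.1 ∂(P x) + ∫⁻ yz, f yz.2 ∂(P x)) / 2

/-- `μ` is invariant for `Q = (P₀ + P₁)/2`. -/
def QInvariant {S : Type*} [MeasurableSpace S] (P : Kernel S (S × S)) (μ : Measure S) : Prop :=
  ∀ f : S → ℝ≥0∞, Measurable f → ∫⁻ x, QL P f x ∂μ = ∫⁻ x, f x ∂μ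

/-!
Given generation `n`, the children of the nodes `i ∈ G_n` are drawn independently from
`P(X_i, ·)`; the definition of a BMC states this for bounded functionals only, and truncation
plus monotone convergence extends it to all non-negative ones. Hence
`E[M_{G_{n+1}}(f)] = 2 E[M_{G_n}(Qf)]`, i.e. `E[M_{G_n}(f)] = 2ⁿ E[Qⁿf(X_∅)]`, and for `n ≥ k₀`
the density bound and the `Q`-invariance of `μ` give `E[M_{G_n}(f)] ≤ 2ⁿ ‖ν₀‖_∞ ‖f‖_{L¹(μ)}`.
Expanding the square, the diagonal terms are at most `4 Q(f²)` (from `(a + b)² ≤ 2(a² + b²)`)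
and the off-diagonal ones factor, so
`E[M_{G_{n+1}}(f)²] ≤ 4 E[M_{G_n}(Q(f²))] + 4 E[M_{G_n}(Qf)²]`. Starting from Cauchy–Schwarz
over the `2^{k₀}` nodes of `G_{k₀}` and iterating gives the second bound with
`C = 2^{k₀+1} ‖ν₀‖_∞`.
-/

open scoped NNReal

theorem ENNReal.finsetProd_iSup_of_monotone {ι α : Type*} [Preorder ι] [IsDirectedOrder ι]
    [Nonempty ι] {s : Finset α} {f : α → ι → ℝ≥0∞} (hf : ∀ a, Monotone (f a)) :
    ∏ a ∈ s, iSup (f a) = ⨆ n, ∏ a ∈ s, f a n := by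
  refine le_antisymm ?_ (iSup_le fun n => Finset.prod_le_prod' fun a _ => le_iSup (f a) n)
  induction s using Finset.cons_induction with
  | empty => simp
  | cons a s ha ih =>
    calc ∏ b ∈ Finset.cons a s ha, iSup (f b) ≤ iSup (f a) * ⨆ n, ∏ b ∈ s, f b n := by
          rw [Finset.prod_cons]; gcongr
      _ ≤ ⨆ n, ∏ b ∈ Finset.cons a s ha, f b n := by
          rw [ENNReal.iSup_mul]
          refine iSup_le fun i => ?_
          rw [ENNReal.mul_iSup]
          refine iSup_le fun j => ?_
          obtain ⟨k, hik, hjk⟩ := exists_ge_ge i j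
          refine le_iSup_of_le k ?_
          rw [Finset.prod_cons]
          exact mul_le_mul' (hf a hik) (Finset.prod_le_prod' fun b _ => hf b hjk)

theorem ENNReal.iSup_min_natCast (a : ℝ≥0∞) : ⨆ n : ℕ, min a n = a := by
  rw [← inf_iSup_eq, ENNReal.iSup_natCast, inf_top_eq]

theorem ENNReal.monotone_min_natCast (a : ℝ≥0∞) : Monotone fun n : ℕ => min a n :=
  fun _ _ h => min_le_min_left a (Nat.mono_cast h)

theorem ENNReal.sq_sum_le_card_mul_sum_sq {ι : Type*} (s : Finset ι) (f : ι → ℝ≥0∞) :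
    (∑ i ∈ s, f i) ^ 2 ≤ s.card * ∑ i ∈ s, f i ^ 2 := by
  by_cases hf : ∃ i ∈ s, f i = ∞
  · obtain ⟨i, hi, hfi⟩ := hf
    have hsum : ∑ j ∈ s, f j ^ 2 = ∞ :=
      top_unique (le_of_eq_of_le (by simp [hfi]) (Finset.single_le_sum (fun j _ => zero_le) hi))
    rw [hsum, ENNReal.mul_top (Nat.cast_ne_zero.mpr (Finset.card_pos.mpr ⟨i, hi⟩).ne')]
    exact le_top
  · push Not at hf
    have hcoe : ∀ i ∈ s, f i = ((f i).toNNReal : ℝ≥0∞) := fun i hi => (coe_toNNReal (hf i hi)).symm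
    have hsum : ∑ i ∈ s, f i = ((∑ i ∈ s, (f i).toNNReal : ℝ≥0) : ℝ≥0∞) := by
      push_cast; exact Finset.sum_congr rfl hcoe
    have hsum_sq : ∑ i ∈ s, f i ^ 2 = ((∑ i ∈ s, (f i).toNNReal ^ 2 : ℝ≥0) : ℝ≥0∞) := by
      push_cast; exact Finset.sum_congr rfl fun i hi => by rw [hcoe i hi, ENNReal.toNNReal_coe]
    rw [hsum, hsum_sq]
    exact_mod_cast _root_.sq_sum_le_card_mul_sum_sq (s := s) (f := fun i => (f i).toNNReal)

theorem ENNReal.add_sq_le (a b : ℝ≥0∞) : (a + b) ^ 2 ≤ 2 * (a ^ 2 + b ^ 2) := by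
  simpa [Fin.sum_univ_two] using ENNReal.sq_sum_le_card_mul_sum_sq Finset.univ ![a, b]

theorem MeasureTheory.lintegral_prod_iSup_of_monotone {α ι : Type*} [MeasurableSpace α]
    {μ : Measure α} [Fintype ι] {f : ι → ℕ → α → ℝ≥0∞} (hf : ∀ i n, Measurable (f i n))
    (hmono : ∀ i, Monotone (f i)) :
    ∫⁻ x, ∏ i, ⨆ n, f i n x ∂μ = ⨆ n, ∫⁻ x, ∏ i, f i n x ∂μ := by
  simp_rw [ENNReal.finsetProd_iSup_of_monotone fun i _ _ h => hmono i h _]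
  exact lintegral_iSup (fun n => Finset.measurable_prod _ fun i _ => hf i n)
    fun _ _ h x => Finset.prod_le_prod' fun i _ => hmono i h x

theorem MeasureTheory.lintegral_sum_sq {α ι : Type*} [MeasurableSpace α] {μ : Measure α}
    [Fintype ι] {a : ι → α → ℝ≥0∞} (ha : ∀ i, Measurable (a i)) :
    ∫⁻ x, (∑ i, a i x) ^ 2 ∂μ = ∑ i, ∑ j, ∫⁻ x, a i x * a j x ∂μ := by
  simp_rw [sq, Finset.sum_mul_sum]
  rw [lintegral_finsetSum _ fun i _ => by fun_prop]
  exact Finset.sum_congr rfl fun i _ => lintegral_finsetSum _ fun j _ => by fun_prop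

theorem MeasureTheory.lintegral_eq_of_integral_toReal_eq {α : Type*} [MeasurableSpace α]
    {μ : Measure α} [IsFiniteMeasure μ] {u v : α → ℝ≥0∞} (hu : Measurable u) (hv : Measurable v)
    {c : ℝ≥0} (huc : ∀ x, u x ≤ c) (hvc : ∀ x, v x ≤ c)
    (h : ∫ x, (u x).toReal ∂μ = ∫ x, (v x).toReal ∂μ) :
    ∫⁻ x, u x ∂μ = ∫⁻ x, v x ∂μ := by
  rw [integral_toReal hu.aemeasurable (ae_of_all _ fun x => (huc x).trans_lt coe_lt_top),
    integral_toReal hv.aemeasurable (ae_of_all _ fun x => (hvc x).trans_lt coe_lt_top)] at h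
  exact (toReal_eq_toReal_iff'
    (IsFiniteMeasure.lintegral_lt_top_of_bounded_to_ennreal μ ⟨c, huc⟩).ne
    (IsFiniteMeasure.lintegral_lt_top_of_bounded_to_ennreal μ ⟨c, hvc⟩).ne).mp h

theorem Finset.sum_range_succ_two_pow_mul {R : Type*} [CommSemiring R] (a : ℕ → R) (n : ℕ) :
    ∑ j ∈ range (n + 1), 2 ^ j * a j = 2 * ∑ j ∈ range n, 2 ^ j * a (j + 1) + a 0 := by
  rw [sum_range_succ', mul_sum, pow_zero, one_mul]
  simp_rw [pow_succ, mul_assoc, mul_left_comm _ (2 : R)]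

section QOperator

variable {S : Type*} [MeasurableSpace S] {P : Kernel S (S × S)}

theorem measurable_QL {f : S → ℝ≥0∞} (hf : Measurable f) : Measurable (QL P f) :=
  (((hf.comp measurable_fst).lintegral_kernel).add
    ((hf.comp measurable_snd).lintegral_kernel)).div_const 2

theorem measurable_iterate_QL {f : S → ℝ≥0∞} (hf : Measurable f) (n : ℕ) :
    Measurable ((QL P)^[n] f) := by
  induction n with
  | zero => exact hf
  | succ n ih => rw [Function.iterate_succ_apply']; exact measurable_QL ih

theorem lintegral_fst_add_snd {f : S → ℝ≥0∞} (hf : Measurable f) (x : S) :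
    ∫⁻ yz, (f yz.1 + f yz.2) ∂(P x) = 2 * QL P f x := by
  rw [lintegral_add_left (by fun_prop), QL,
    ENNReal.mul_div_cancel two_ne_zero ofNat_ne_top]

theorem lintegral_fst_add_snd_sq_le {f : S → ℝ≥0∞} (hf : Measurable f) (x : S) :
    ∫⁻ yz, (f yz.1 + f yz.2) ^ 2 ∂(P x) ≤ 4 * QL P (fun y => f y ^ 2) x :=
  calc ∫⁻ yz, (f yz.1 + f yz.2) ^ 2 ∂(P x)
      ≤ ∫⁻ yz, 2 * (f yz.1 ^ 2 + f yz.2 ^ 2) ∂(P x) :=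
        lintegral_mono fun _ => ENNReal.add_sq_le _ _
    _ = 4 * QL P (fun y => f y ^ 2) x := by
        rw [lintegral_const_mul' _ _ ofNat_ne_top, lintegral_fst_add_snd (hf.pow_const 2),
          ← mul_assoc]
        norm_num

theorem QInvariant.lintegral_iterate {μ : Measure S} (hinv : QInvariant P μ) {f : S → ℝ≥0∞}
    (hf : Measurable f) (n : ℕ) : ∫⁻ x, (QL P)^[n] f x ∂μ = ∫⁻ x, f x ∂μ := by
  induction n with
  | zero => rfl
  | succ n ih => rw [Function.iterate_succ_apply', hinv _ (measurable_iterate_QL hf n), ih]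

end QOperator

def childPair {Ω S : Type*} (X : TreeNode → Ω → S) {k : ℕ} (i : Fin k → Bool) (ω : Ω) : S × S :=
  (X (childNode i false) ω, X (childNode i true) ω)

/-- `M_{G_n}(f)`. -/
def genSum {Ω S : Type*} (X : TreeNode → Ω → S) (n : ℕ) (f : S → ℝ≥0∞) (ω : Ω) : ℝ≥0∞ :=
  ∑ i : Fin n → Bool, f (X ⟨n, i⟩ ω)

theorem genSum_zero {Ω S : Type*} (X : TreeNode → Ω → S) (f : S → ℝ≥0∞) (ω : Ω) :
    genSum X 0 f ω = f (X rootNode ω) := by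
  simp [genSum, rootNode, Subsingleton.elim _ (fun i : Fin 0 => i.elim0)]

theorem genSum_succ {Ω S : Type*} (X : TreeNode → Ω → S) (n : ℕ) (f : S → ℝ≥0∞) (ω : Ω) :
    genSum X (n + 1) f ω = ∑ i : Fin n → Bool, (f (childPair X i ω).1 + f (childPair X i ω).2) := by
  rw [genSum, ← (Fin.snocEquiv fun _ => Bool).sum_comp, Fintype.sum_prod_type_right]
  simp only [Fintype.sum_bool]
  exact Finset.sum_congr rfl fun i _ => add_comm _ _

theorem genSum_sq_le {Ω S : Type*} (X : TreeNode → Ω → S) (n : ℕ) (f : S → ℝ≥0∞) (ω : Ω) :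
    genSum X n f ω ^ 2 ≤ 2 ^ n * genSum X n (fun y => f y ^ 2) ω :=
  (ENNReal.sq_sum_le_card_mul_sum_sq _ _).trans_eq (by simp [genSum])

namespace IsBMC

variable {S Ω : Type*} [MeasurableSpace S] [MeasurableSpace Ω] {m : Measure Ω}
  {P : Kernel S (S × S)} {X : TreeNode → Ω → S}

theorem measurable_childPair (hX : IsBMC m P X) {k : ℕ} (i : Fin k → Bool) :
    Measurable (childPair X i) :=
  (hX.1 _).prodMk (hX.1 _)

theorem lintegral_prod_childPair_of_le [IsFiniteMeasure m] [IsMarkovKernel P]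
    (hX : IsBMC m P X) {k : ℕ} {g : (Fin k → Bool) → S × S → ℝ≥0∞}
    (hg : ∀ i, Measurable (g i)) {c : ℝ≥0} (hgc : ∀ i yz, g i yz ≤ c) :
    ∫⁻ ω, ∏ i, g i (childPair X i ω) ∂m
      = ∫⁻ ω, ∏ i, ∫⁻ yz, g i yz ∂(P (X ⟨k, i⟩ ω)) ∂m := by
  have hprod_le : ∀ a : (Fin k → Bool) → ℝ≥0∞, (∀ i, a i ≤ c) →
      ∏ i, a i ≤ ((c ^ Fintype.card (Fin k → Bool) : ℝ≥0) : ℝ≥0∞) := fun a ha => by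
    push_cast
    exact (Finset.prod_le_prod' fun i _ => ha i).trans_eq (by simp)
  have hinner : ∀ i x, ∫ yz, (g i (yz.1, yz.2)).toReal ∂(P x) = (∫⁻ yz, g i yz ∂(P x)).toReal :=
    fun i x => integral_toReal (hg i).aemeasurable
      (ae_of_all _ fun yz => (hgc i yz).trans_lt coe_lt_top)
  have hbmc := hX.2 k (fun i _ y z => (g i (y, z)).toReal)
    (fun i => ENNReal.measurable_toReal.comp
      ((hg i).comp (measurable_snd.fst.prodMk measurable_snd.snd)))
    (fun i => ⟨c, fun _ y z => by
      rw [abs_of_nonneg toReal_nonneg]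
      exact ENNReal.toReal_le_coe_of_le_coe (hgc i (y, z))⟩)
    (fun _ => 1) measurable_const ⟨1, fun _ => by simp⟩
  simp only [mul_one, hinner, ← ENNReal.toReal_prod] at hbmc
  exact lintegral_eq_of_integral_toReal_eq
    (Finset.measurable_prod _ fun i _ => (hg i).comp (hX.measurable_childPair i))
    (Finset.measurable_prod _ fun i _ => (hg i).lintegral_kernel.comp (hX.1 _))
    (fun ω => hprod_le _ fun i => hgc i _)
    (fun ω => hprod_le _ fun i => lintegral_le_const (ae_of_all _ (hgc i))) hbmc

theorem lintegral_prod_childPair [IsFiniteMeasure m] [IsMarkovKernel P]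
    (hX : IsBMC m P X) {k : ℕ} {g : (Fin k → Bool) → S × S → ℝ≥0∞}
    (hg : ∀ i, Measurable (g i)) :
    ∫⁻ ω, ∏ i, g i (childPair X i ω) ∂m
      = ∫⁻ ω, ∏ i, ∫⁻ yz, g i yz ∂(P (X ⟨k, i⟩ ω)) ∂m := by
  have htrunc_meas : ∀ i (n : ℕ), Measurable fun yz => min (g i yz) n :=
    fun i n => (hg i).min measurable_const
  have htrunc_mono : ∀ i yz, Monotone fun n : ℕ => min (g i yz) n :=
    fun i yz => ENNReal.monotone_min_natCast _
  calc ∫⁻ ω, ∏ i, g i (childPair X i ω) ∂m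
      = ∫⁻ ω, ∏ i, ⨆ n : ℕ, min (g i (childPair X i ω)) n ∂m := by
        simp_rw [ENNReal.iSup_min_natCast]
    _ = ⨆ n : ℕ, ∫⁻ ω, ∏ i, min (g i (childPair X i ω)) n ∂m :=
        lintegral_prod_iSup_of_monotone (f := fun i n ω => min (g i (childPair X i ω)) n)
          (fun i n => (htrunc_meas i n).comp (hX.measurable_childPair i))
          fun i _ _ h ω => htrunc_mono i _ h
    _ = ⨆ n : ℕ, ∫⁻ ω, ∏ i, ∫⁻ yz, min (g i yz) n ∂(P (X ⟨k, i⟩ ω)) ∂m := by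
        refine iSup_congr fun n => ?_
        exact hX.lintegral_prod_childPair_of_le (fun i => htrunc_meas i n)
          (g := fun i yz => min (g i yz) n) (c := n) fun i yz => by simp
    _ = ∫⁻ ω, ∏ i, ⨆ n : ℕ, ∫⁻ yz, min (g i yz) n ∂(P (X ⟨k, i⟩ ω)) ∂m :=
        (lintegral_prod_iSup_of_monotone
          (f := fun i n ω => ∫⁻ yz, min (g i yz) n ∂(P (X ⟨k, i⟩ ω)))
          (fun i n => (htrunc_meas i n).lintegral_kernel.comp (hX.1 _))
          fun i _ _ h ω => lintegral_mono fun yz => htrunc_mono i yz h).symm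
    _ = ∫⁻ ω, ∏ i, ∫⁻ yz, g i yz ∂(P (X ⟨k, i⟩ ω)) ∂m := by
        simp_rw [← lintegral_iSup (htrunc_meas _) (fun _ _ h yz => htrunc_mono _ yz h),
          ENNReal.iSup_min_natCast]

theorem lintegral_comp_childPair [IsFiniteMeasure m] [IsMarkovKernel P]
    (hX : IsBMC m P X) {k : ℕ} (i : Fin k → Bool) {F : S × S → ℝ≥0∞} (hF : Measurable F) :
    ∫⁻ ω, F (childPair X i ω) ∂m = ∫⁻ ω, ∫⁻ yz, F yz ∂(P (X ⟨k, i⟩ ω)) ∂m := by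
  convert hX.lintegral_prod_childPair (g := Pi.mulSingle i F) (fun l => ?_) using 3 with ω ω
  · rw [Fintype.prod_eq_single i fun l hl => by simp [hl]]; simp
  · rw [Fintype.prod_eq_single i fun l hl => by simp [hl]]; simp
  · by_cases hl : l = i
    · subst hl; simpa using hF
    · simp [hl, measurable_one]

theorem lintegral_mul_comp_childPair [IsFiniteMeasure m] [IsMarkovKernel P]
    (hX : IsBMC m P X) {k : ℕ} {i j : Fin k → Bool} (hij : i ≠ j)
    {F G : S × S → ℝ≥0∞} (hF : Measurable F) (hG : Measurable G) :
    ∫⁻ ω, F (childPair X i ω) * G (childPair X j ω) ∂m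
      = ∫⁻ ω, (∫⁻ yz, F yz ∂(P (X ⟨k, i⟩ ω))) * ∫⁻ yz, G yz ∂(P (X ⟨k, j⟩ ω)) ∂m := by
  convert hX.lintegral_prod_childPair (g := Pi.mulSingle i F * Pi.mulSingle j G) (fun l => ?_)
    using 3 with ω ω
  · rw [Fintype.prod_eq_mul i j hij fun l hl => by simp [hl.1, hl.2]]; simp [hij, hij.symm]
  · rw [Fintype.prod_eq_mul i j hij fun l hl => by simp [hl.1, hl.2]]; simp [hij, hij.symm]
  · by_cases hli : l = i
    · subst hli; simpa [hij] using hF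
    · by_cases hlj : l = j
      · subst hlj; simpa [hli] using hG
      · simp [hli, hlj, measurable_one]

theorem lintegral_genSum_eq_sum (hX : IsBMC m P X) {f : S → ℝ≥0∞} (hf : Measurable f)
    (n : ℕ) : ∫⁻ ω, genSum X n f ω ∂m = ∑ i, ∫⁻ ω, f (X ⟨n, i⟩ ω) ∂m :=
  lintegral_finsetSum (f := fun i ω => f (X ⟨n, i⟩ ω)) _ fun _ _ => hf.comp (hX.1 _)

theorem lintegral_genSum_succ [IsFiniteMeasure m] [IsMarkovKernel P] (hX : IsBMC m P X)
    {f : S → ℝ≥0∞} (hf : Measurable f) (n : ℕ) :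
    ∫⁻ ω, genSum X (n + 1) f ω ∂m = 2 * ∫⁻ ω, genSum X n (QL P f) ω ∂m := by
  have hF : Measurable fun yz : S × S => f yz.1 + f yz.2 := by fun_prop
  simp_rw [hX.lintegral_genSum_eq_sum (measurable_QL hf), genSum_succ]
  rw [lintegral_finsetSum (f := fun i ω => f (childPair X i ω).1 + f (childPair X i ω).2) _
      fun i _ => hF.comp (hX.measurable_childPair i), Finset.mul_sum]
  refine Finset.sum_congr rfl fun i _ => ?_
  rw [hX.lintegral_comp_childPair i hF]
  simp_rw [lintegral_fst_add_snd hf]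
  exact lintegral_const_mul' _ _ ofNat_ne_top

theorem lintegral_genSum [IsFiniteMeasure m] [IsMarkovKernel P] (hX : IsBMC m P X)
    {f : S → ℝ≥0∞} (hf : Measurable f) (n : ℕ) :
    ∫⁻ ω, genSum X n f ω ∂m = 2 ^ n * ∫⁻ ω, (QL P)^[n] f (X rootNode ω) ∂m := by
  induction n generalizing f with
  | zero => simp [genSum_zero]
  | succ n ih =>
    rw [hX.lintegral_genSum_succ hf, ih (measurable_QL hf), Function.iterate_succ_apply, pow_succ,
      mul_left_comm, mul_assoc]

theorem lintegral_mul_childPair_le [IsFiniteMeasure m] [IsMarkovKernel P] (hX : IsBMC m P X)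
    {f : S → ℝ≥0∞} (hf : Measurable f) {n : ℕ} (i j : Fin n → Bool) :
    ∫⁻ ω, (f (childPair X i ω).1 + f (childPair X i ω).2)
        * (f (childPair X j ω).1 + f (childPair X j ω).2) ∂m
      ≤ (if i = j then 4 * ∫⁻ ω, QL P (fun y => f y ^ 2) (X ⟨n, i⟩ ω) ∂m else 0)
          + 4 * ∫⁻ ω, QL P f (X ⟨n, i⟩ ω) * QL P f (X ⟨n, j⟩ ω) ∂m := by
  have hF : Measurable fun yz : S × S => f yz.1 + f yz.2 := by fun_prop
  rcases eq_or_ne i j with rfl | hij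
  · calc ∫⁻ ω, (f (childPair X i ω).1 + f (childPair X i ω).2)
            * (f (childPair X i ω).1 + f (childPair X i ω).2) ∂m
        = ∫⁻ ω, ∫⁻ yz, (f yz.1 + f yz.2) ^ 2 ∂(P (X ⟨n, i⟩ ω)) ∂m := by
          simp_rw [← sq]
          exact hX.lintegral_comp_childPair i (hF.pow_const 2)
      _ ≤ ∫⁻ ω, 4 * QL P (fun y => f y ^ 2) (X ⟨n, i⟩ ω) ∂m :=
          lintegral_mono fun ω => lintegral_fst_add_snd_sq_le hf _
      _ ≤ _ := by
          rw [if_pos rfl, lintegral_const_mul' _ _ ofNat_ne_top]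
          exact le_self_add
  · calc ∫⁻ ω, (f (childPair X i ω).1 + f (childPair X i ω).2)
            * (f (childPair X j ω).1 + f (childPair X j ω).2) ∂m
        = ∫⁻ ω, (∫⁻ yz, (f yz.1 + f yz.2) ∂(P (X ⟨n, i⟩ ω)))
            * ∫⁻ yz, (f yz.1 + f yz.2) ∂(P (X ⟨n, j⟩ ω)) ∂m :=
          hX.lintegral_mul_comp_childPair hij hF hF
      _ = 4 * ∫⁻ ω, QL P f (X ⟨n, i⟩ ω) * QL P f (X ⟨n, j⟩ ω) ∂m := by
          simp_rw [lintegral_fst_add_snd hf]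
          rw [← lintegral_const_mul' _ _ ofNat_ne_top]
          exact lintegral_congr fun ω => by ring
      _ ≤ _ := by rw [if_neg hij, zero_add]

theorem lintegral_genSum_sq_succ_le [IsFiniteMeasure m] [IsMarkovKernel P] (hX : IsBMC m P X)
    {f : S → ℝ≥0∞} (hf : Measurable f) (n : ℕ) :
    ∫⁻ ω, genSum X (n + 1) f ω ^ 2 ∂m
      ≤ 4 * ∫⁻ ω, genSum X n (QL P fun y => f y ^ 2) ω ∂m
        + 4 * ∫⁻ ω, genSum X n (QL P f) ω ^ 2 ∂m := by
  have hQf : ∀ i : Fin n → Bool, Measurable fun ω => QL P f (X ⟨n, i⟩ ω) :=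
    fun i => (measurable_QL hf).comp (hX.1 _)
  have hch : ∀ i : Fin n → Bool,
      Measurable fun ω => f (childPair X i ω).1 + f (childPair X i ω).2 :=
    fun i => (show Measurable fun yz : S × S => f yz.1 + f yz.2 by fun_prop).comp
      (hX.measurable_childPair i)
  calc ∫⁻ ω, genSum X (n + 1) f ω ^ 2 ∂m
      = ∑ i, ∑ j, ∫⁻ ω, (f (childPair X i ω).1 + f (childPair X i ω).2)
          * (f (childPair X j ω).1 + f (childPair X j ω).2) ∂m := by
        simp_rw [genSum_succ]
        exact lintegral_sum_sq hch
    _ ≤ ∑ i, ∑ j, ((if i = j then 4 * ∫⁻ ω, QL P (fun y => f y ^ 2) (X ⟨n, i⟩ ω) ∂m else 0)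
          + 4 * ∫⁻ ω, QL P f (X ⟨n, i⟩ ω) * QL P f (X ⟨n, j⟩ ω) ∂m) :=
        Finset.sum_le_sum fun i _ => Finset.sum_le_sum fun j _ =>
          hX.lintegral_mul_childPair_le hf i j
    _ = _ := by
        rw [hX.lintegral_genSum_eq_sum (measurable_QL (hf.pow_const 2))]
        simp only [genSum, lintegral_sum_sq hQf, Finset.sum_add_distrib, Finset.sum_ite_eq,
          Finset.mem_univ, if_true, Finset.mul_sum]

end IsBMC

section Density

variable {S Ω : Type*} [MeasurableSpace S] [MeasurableSpace Ω] {m : Measure Ω}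
  {P : Kernel S (S × S)} {X : TreeNode → Ω → S} {μ : Measure S} {k₀ : ℕ} {ν₀ : S → ℝ≥0∞}
  {c : ℝ≥0∞}

theorem lintegral_genSum_le_of_density [IsFiniteMeasure m] [IsMarkovKernel P]
    (hX : IsBMC m P X) (hinv : QInvariant P μ)
    (hdens : ∀ f : S → ℝ≥0∞, Measurable f →
      ∫⁻ ω, (QL P)^[k₀] f (X rootNode ω) ∂m = ∫⁻ y, ν₀ y * f y ∂μ)
    (hc : ∀ y, ν₀ y ≤ c) {f : S → ℝ≥0∞} (hf : Measurable f) {n : ℕ} (hn : k₀ ≤ n) :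
    ∫⁻ ω, genSum X n f ω ∂m ≤ 2 ^ n * c * ∫⁻ y, f y ∂μ := by
  obtain ⟨d, rfl⟩ := Nat.exists_eq_add_of_le hn
  calc ∫⁻ ω, genSum X (k₀ + d) f ω ∂m
      = 2 ^ (k₀ + d) * ∫⁻ y, ν₀ y * (QL P)^[d] f y ∂μ := by
        rw [hX.lintegral_genSum hf, Function.iterate_add_apply,
          hdens _ (measurable_iterate_QL hf d)]
    _ ≤ 2 ^ (k₀ + d) * ∫⁻ y, c * (QL P)^[d] f y ∂μ := by
        gcongr with y
        exact hc y
    _ = 2 ^ (k₀ + d) * c * ∫⁻ y, f y ∂μ := by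
        rw [lintegral_const_mul _ (measurable_iterate_QL hf d), hinv.lintegral_iterate hf,
          mul_assoc]

theorem lintegral_genSum_sq_le_of_density [IsFiniteMeasure m] [IsMarkovKernel P]
    (hX : IsBMC m P X) (hinv : QInvariant P μ)
    (hdens : ∀ f : S → ℝ≥0∞, Measurable f →
      ∫⁻ ω, (QL P)^[k₀] f (X rootNode ω) ∂m = ∫⁻ y, ν₀ y * f y ∂μ)
    (hc : ∀ y, ν₀ y ≤ c) {n : ℕ} (hn : k₀ ≤ n) {f : S → ℝ≥0∞} (hf : Measurable f) :
    ∫⁻ ω, genSum X n f ω ^ 2 ∂m ≤ 2 ^ n * (2 ^ n * c * ∫⁻ y, f y ^ 2 ∂μ) :=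
  calc ∫⁻ ω, genSum X n f ω ^ 2 ∂m
      ≤ ∫⁻ ω, 2 ^ n * genSum X n (fun y => f y ^ 2) ω ∂m :=
        lintegral_mono fun ω => genSum_sq_le X n f ω
    _ ≤ 2 ^ n * (2 ^ n * c * ∫⁻ y, f y ^ 2 ∂μ) := by
        rw [lintegral_const_mul' _ _ (pow_ne_top ofNat_ne_top)]
        gcongr
        exact lintegral_genSum_le_of_density hX hinv hdens hc (hf.pow_const 2) hn

theorem lintegral_genSum_sq_le_sum_of_density [IsFiniteMeasure m] [IsMarkovKernel P]
    (hX : IsBMC m P X) (hinv : QInvariant P μ)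
    (hdens : ∀ f : S → ℝ≥0∞, Measurable f →
      ∫⁻ ω, (QL P)^[k₀] f (X rootNode ω) ∂m = ∫⁻ y, ν₀ y * f y ∂μ)
    (hc : ∀ y, ν₀ y ≤ c) {n : ℕ} (hn : k₀ ≤ n) {f : S → ℝ≥0∞} (hf : Measurable f) :
    ∫⁻ ω, genSum X n f ω ^ 2 ∂m
      ≤ 2 ^ (k₀ + 1) * c * 2 ^ n
        * ∑ j ∈ Finset.range (n + 1), 2 ^ j * ∫⁻ y, ((QL P)^[j] f y) ^ 2 ∂μ := by
  induction n, hn using Nat.le_induction generalizing f with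
  | base =>
    calc ∫⁻ ω, genSum X k₀ f ω ^ 2 ∂m ≤ 2 ^ k₀ * c * 2 ^ k₀ * ∫⁻ y, f y ^ 2 ∂μ :=
          (lintegral_genSum_sq_le_of_density hX hinv hdens hc le_rfl hf).trans_eq (by ring)
      _ ≤ 2 ^ (k₀ + 1) * c * 2 ^ k₀ * (2 ^ 0 * ∫⁻ y, ((QL P)^[0] f y) ^ 2 ∂μ) := by
          rw [pow_zero, one_mul, Function.iterate_zero_apply]
          gcongr
          · norm_num
          · omega
      _ ≤ _ := by
          gcongr
          exact Finset.single_le_sum (f := fun j => 2 ^ j * ∫⁻ y, ((QL P)^[j] f y) ^ 2 ∂μ)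
            (fun _ _ => zero_le) (Finset.mem_range.mpr (Nat.succ_pos _))
  | succ n hn ih =>
    have htwo : (2 : ℝ≥0∞) ≤ 2 ^ (k₀ + 1) := le_self_pow₀ one_le_two k₀.succ_ne_zero
    calc ∫⁻ ω, genSum X (n + 1) f ω ^ 2 ∂m
        ≤ 4 * ∫⁻ ω, genSum X n (QL P fun y => f y ^ 2) ω ∂m
          + 4 * ∫⁻ ω, genSum X n (QL P f) ω ^ 2 ∂m := hX.lintegral_genSum_sq_succ_le hf n
      _ ≤ 4 * (2 ^ n * c * ∫⁻ y, QL P (fun y => f y ^ 2) y ∂μ)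
          + 4 * (2 ^ (k₀ + 1) * c * 2 ^ n
            * ∑ j ∈ Finset.range (n + 1), 2 ^ j * ∫⁻ y, ((QL P)^[j] (QL P f) y) ^ 2 ∂μ) := by
          gcongr
          · exact lintegral_genSum_le_of_density hX hinv hdens hc
              (measurable_QL (hf.pow_const 2)) hn
          · exact ih (measurable_QL hf)
      _ = 2 ^ (k₀ + 1) * c * 2 ^ (n + 1)
            * (2 * ∑ j ∈ Finset.range (n + 1), 2 ^ j * ∫⁻ y, ((QL P)^[j] (QL P f) y) ^ 2 ∂μ)
          + 2 * c * 2 ^ (n + 1) * ∫⁻ y, f y ^ 2 ∂μ := by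
          rw [hinv _ (hf.pow_const 2)]
          ring
      _ ≤ 2 ^ (k₀ + 1) * c * 2 ^ (n + 1)
            * (2 * ∑ j ∈ Finset.range (n + 1), 2 ^ j * ∫⁻ y, ((QL P)^[j] (QL P f) y) ^ 2 ∂μ)
          + 2 ^ (k₀ + 1) * c * 2 ^ (n + 1) * ∫⁻ y, f y ^ 2 ∂μ := by
          gcongr
      _ = _ := by
          rw [Finset.sum_range_succ_two_pow_mul (fun j => ∫⁻ y, ((QL P)^[j] f y) ^ 2 ∂μ)]
          simp only [Function.iterate_succ_apply, Function.iterate_zero_apply]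
          ring

end Density

theorem stmt8_general {S Ω : Type*} [MeasurableSpace S] [MeasurableSpace Ω]
    (m : Measure Ω) [IsProbabilityMeasure m]
    (P : Kernel S (S × S)) [IsMarkovKernel P]
    (X : TreeNode → Ω → S) (hX : IsBMC m P X)
    (μ : Measure S) (hinv : QInvariant P μ)
    (k₀ : ℕ) (ν₀ : S → ℝ≥0∞) (hν₀b : ∃ c : ℝ≥0∞, c ≠ ⊤ ∧ ∀ y, ν₀ y ≤ c)
    (hdens : ∀ f : S → ℝ≥0∞, Measurable f →
      ∫⁻ ω, (QL P)^[k₀] f (X rootNode ω) ∂m = ∫⁻ y, ν₀ y * f y ∂μ) :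
    ∃ C : ℝ≥0∞, C ≠ ⊤ ∧ ∀ f : S → ℝ≥0∞, Measurable f → ∀ n, k₀ ≤ n →
      (∫⁻ ω, ∑ i : Fin n → Bool, f (X ⟨n, i⟩ ω) ∂m) / 2 ^ n
          ≤ C * ∫⁻ y, f y ∂μ
      ∧ (∫⁻ ω, (∑ i : Fin n → Bool, f (X ⟨n, i⟩ ω)) ^ 2 ∂m) / 2 ^ n
          ≤ C * ∑ k ∈ Finset.range (n + 1), 2 ^ k * ∫⁻ y, ((QL P)^[k] f y) ^ 2 ∂μ := by
  obtain ⟨c, hc_top, hc⟩ := hν₀b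
  refine ⟨2 ^ (k₀ + 1) * c, mul_ne_top (pow_ne_top ofNat_ne_top) hc_top,
    fun f hf n hn => ⟨?_, ?_⟩⟩ <;>
    rw [ENNReal.div_le_iff (pow_ne_zero _ two_ne_zero) (pow_ne_top ofNat_ne_top)]
  · calc ∫⁻ ω, genSum X n f ω ∂m ≤ 2 ^ n * c * ∫⁻ y, f y ∂μ :=
          lintegral_genSum_le_of_density hX hinv hdens hc hf hn
      _ ≤ 2 ^ n * (2 ^ (k₀ + 1) * c) * ∫⁻ y, f y ∂μ := by
          gcongr
          exact le_mul_of_one_le_left' (one_le_pow₀ one_le_two)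
      _ = _ := by ring
  · calc ∫⁻ ω, genSum X n f ω ^ 2 ∂m
        ≤ 2 ^ (k₀ + 1) * c * 2 ^ n
          * ∑ j ∈ Finset.range (n + 1), 2 ^ j * ∫⁻ y, ((QL P)^[j] f y) ^ 2 ∂μ :=
          lintegral_genSum_sq_le_sum_of_density hX hinv hdens hc hn hf
      _ = _ := by ring

/-- If the law `ν Q^{k₀}` of the chain after `k₀` steps has a bounded density `ν₀`
with respect to the `Q`-invariant probability measure `μ`, then there is a finite
constant `C` with, for all non-negative measurable `f` and all `n ≥ k₀`:
`2^{-n} E[M_{G_n}(f)] ≤ C ‖f‖_{L¹(μ)}` and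
`2^{-n} E[M_{G_n}(f)²] ≤ C ∑_{k=0}^{n} 2^k ‖Q^k f‖²_{L²(μ)}`. -/
theorem stmt8 {S Ω : Type*} [MeasurableSpace S] [MeasurableSpace Ω]
    (m : Measure Ω) [IsProbabilityMeasure m]
    (P : Kernel S (S × S)) [IsMarkovKernel P]
    (X : TreeNode → Ω → S) (hX : IsBMC m P X)
    (μ : Measure S) [IsProbabilityMeasure μ] (hinv : QInvariant P μ)
    (k₀ : ℕ) (ν₀ : S → ℝ≥0∞) (hν₀m : Measurable ν₀) (hν₀b : ∃ c : ℝ≥0∞, c ≠ ⊤ ∧ ∀ y, ν₀ y ≤ c)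
    (hdens : ∀ f : S → ℝ≥0∞, Measurable f →
      ∫⁻ ω, (QL P)^[k₀] f (X rootNode ω) ∂m = ∫⁻ y, ν₀ y * f y ∂μ) :
    ∃ C : ℝ≥0∞, C ≠ ⊤ ∧ ∀ f : S → ℝ≥0∞, Measurable f → ∀ n, k₀ ≤ n →
      (∫⁻ ω, ∑ i : Fin n → Bool, f (X ⟨n, i⟩ ω) ∂m) / 2 ^ n
          ≤ C * ∫⁻ y, f y ∂μ
      ∧ (∫⁻ ω, (∑ i : Fin n → Bool, f (X ⟨n, i⟩ ω)) ^ 2 ∂m) / 2 ^ n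
          ≤ C * ∑ k ∈ Finset.range (n + 1), 2 ^ k * ∫⁻ y, ((QL P)^[k] f y) ^ 2 ∂μ :=
  stmt8_general m P X hX μ hinv k₀ ν₀ hν₀b hdens
end
end
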